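/- arXiv:1310.6572 — 8 statements merged into one kernel-verified Lean document; each statement's English description precedes it below -/
import Mathlib

section
/- In the Chinese monoid of rank n, for all generators w ≤ x ≤ y ≤ z, the elements represented by zw and yx commute: (zw)(yx) = (yx)(zw). -/
open FreeMonoid

/-- The defining relations of the Chinese monoid of rank `n`. -/
def chineseRel (n : ℕ) : FreeMonoid (Fin n) → FreeMonoid (Fin n) → Prop :=
  fun u v => ∃ x y z : Fin n, x ≤ y ∧ y ≤ z ∧
    ((u = of z * of y * of x ∧ v = of z * of x * of y) ∨
     (u = of z * of x * of y ∧ v = of y * of z * of x))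

/-! `zw · yx = (zwy) x = (yzw) x = y (zwx) = y (xzw) = yx · zw`, using the relation
`zxy = yzx` twice, for the triples `w ≤ y ≤ z` and `w ≤ x ≤ z`. -/

theorem conGen_chineseRel_zxy_yzx {n : ℕ} {x y z : Fin n} (hxy : x ≤ y) (hyz : y ≤ z) :
    conGen (chineseRel n) (of z * of x * of y) (of y * of z * of x) :=
  ConGen.Rel.of _ _ ⟨x, y, z, hxy, hyz, Or.inr ⟨rfl, rfl⟩⟩

/-- In the Chinese monoid `C_n`, for generators `w ≤ x ≤ y ≤ z`, the elements
`zw` and `yx` commute: `(zw)(yx) = (yx)(zw)`. -/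
theorem chinese_zw_yx_commute (n : ℕ) (w x y z : Fin n)
    (hwx : w ≤ x) (hxy : x ≤ y) (hyz : y ≤ z) :
    conGen (chineseRel n)
      ((of z * of w) * (of y * of x)) ((of y * of x) * (of z * of w)) := by
  set c := conGen (chineseRel n)
  have hzwy : c (of z * of w * of y * of x) (of y * of z * of w * of x) :=
    c.mul (conGen_chineseRel_zxy_yzx (hwx.trans hxy) hyz) (c.refl (of x))
  have hzwx : c (of y * (of z * of w * of x)) (of y * (of x * of z * of w)) :=
    c.mul (c.refl (of y)) (conGen_chineseRel_zxy_yzx hwx (hxy.trans hyz))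
  simp only [mul_assoc] at hzwy hzwx ⊢
  exact c.trans hzwy hzwx
end

section
/- For any word w over the alphabet {1, ..., n}, the binary search tree insertion map satisfies T(LRP(T(w))) = T(w), i.e., the left-to-right postfix reading of the binary search tree of w has the same binary search tree as w. -/
/-- Labelled rooted binary trees. -/
inductive BinTree (α : Type*) where
  | leaf : BinTree α
  | node : BinTree α → α → BinTree α → BinTree α

namespace BinTree

/-- Insertion into a right strict binary search tree. -/
def insert {α : Type*} [LinearOrder α] (a : α) : BinTree α → BinTree α
  | leaf => node leaf a leaf
  | node l x r => if a ≤ x then node (insert a l) x r else node l x (insert a r)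

/-- The binary search tree of a word: insert the letters from right to left. -/
def treeOf {α : Type*} [LinearOrder α] (w : List α) : BinTree α :=
  w.foldr insert leaf

/-- Left-to-right postfix reading of a binary tree: left subtree, right subtree, root. -/
def lrp {α : Type*} : BinTree α → List α
  | leaf => []
  | node l a r => lrp l ++ lrp r ++ [a]

/-- The right strict binary search tree property: every label in the left subtree of a
node is `≤` its label, and every label in the right subtree is `>` its label. -/
def IsBST {α : Type*} [LinearOrder α] : BinTree α → Prop
  | leaf => True
  | node l a r => (∀ x ∈ lrp l, x ≤ a) ∧ (∀ x ∈ lrp r, a < x) ∧ IsBST l ∧ IsBST r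

end BinTree

/-- A word contains a sylvester left-hand side `c a v b` with `a ≤ b < c`. -/
def HasSylvFactor {α : Type*} [LinearOrder α] (w : List α) : Prop :=
  ∃ (p v s : List α) (a b c : α), a ≤ b ∧ b < c ∧ w = p ++ c :: a :: (v ++ b :: s)

/-- One step of sylvester rewriting: `c a v b → a c v b` for `a ≤ b < c`. -/
def SylvStep {α : Type*} [LinearOrder α] (u v : List α) : Prop :=
  ∃ (p m s : List α) (a b c : α), a ≤ b ∧ b < c ∧
    u = p ++ c :: a :: (m ++ b :: s) ∧ v = p ++ a :: c :: (m ++ b :: s)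

/-! Reading a search tree in postfix order lists the root last, after every label of both
subtrees. Inserting that word from right to left therefore places the root first; the labels
of the right subtree are all larger than it and those of the left subtree all at most it, so
they are routed into the right and left subtrees respectively, where induction rebuilds them. -/

namespace BinTree

variable {α : Type*} [LinearOrder α]

theorem mem_lrp_insert {a x : α} {t : BinTree α} :
    x ∈ lrp (insert a t) ↔ x = a ∨ x ∈ lrp t := by
  induction t with
  | leaf => simp [insert, lrp]
  | node l b r ihl ihr =>
    by_cases h : a ≤ b <;> simp [insert, lrp, h, ihl, ihr] <;> tauto

theorem IsBST.insert (a : α) {t : BinTree α} (h : IsBST t) : IsBST (insert a t) := by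
  induction t with
  | leaf => simp [BinTree.insert, IsBST, lrp]
  | node l b r ihl ihr =>
    obtain ⟨hl, hr, hbl, hbr⟩ := h
    by_cases hab : a ≤ b
    · rw [BinTree.insert, if_pos hab]
      refine ⟨fun x hx => ?_, hr, ihl hbl, hbr⟩
      rcases mem_lrp_insert.1 hx with rfl | hx
      exacts [hab, hl x hx]
    · rw [BinTree.insert, if_neg hab]
      refine ⟨hl, fun x hx => ?_, hbl, ihr hbr⟩
      rcases mem_lrp_insert.1 hx with rfl | hx
      exacts [lt_of_not_ge hab, hr x hx]

theorem isBST_treeOf (w : List α) : IsBST (treeOf w) := by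
  induction w with
  | nil => trivial
  | cons a w ih => exact ih.insert a

theorem foldr_insert_node_of_le {u : List α} {a : α} (h : ∀ x ∈ u, x ≤ a) (l r : BinTree α) :
    u.foldr insert (node l a r) = node (u.foldr insert l) a r := by
  induction u with
  | nil => rfl
  | cons x u ih =>
    simp only [List.forall_mem_cons] at h
    simp only [List.foldr_cons, ih h.2, insert, if_pos h.1]

theorem foldr_insert_node_of_lt {u : List α} {a : α} (h : ∀ x ∈ u, a < x) (l r : BinTree α) :
    u.foldr insert (node l a r) = node l a (u.foldr insert r) := by
  induction u with
  | nil => rfl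
  | cons x u ih =>
    simp only [List.forall_mem_cons] at h
    simp only [List.foldr_cons, ih h.2, insert, if_neg (not_le.2 h.1)]

theorem IsBST.treeOf_lrp {t : BinTree α} (h : IsBST t) : treeOf (lrp t) = t := by
  induction t with
  | leaf => rfl
  | node l a r ihl ihr =>
    obtain ⟨hl, hr, hbl, hbr⟩ := h
    calc treeOf (lrp l ++ lrp r ++ [a])
        = (lrp l).foldr BinTree.insert ((lrp r).foldr BinTree.insert (node leaf a leaf)) := by
          simp only [treeOf, List.append_assoc, List.foldr_append]; rfl
      _ = node (treeOf (lrp l)) a (treeOf (lrp r)) := by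
          rw [foldr_insert_node_of_lt hr, foldr_insert_node_of_le hl]; rfl
      _ = node l a r := by rw [ihl hbl, ihr hbr]

end BinTree

/-- The left-to-right postfix reading of the binary search tree of `w` has the same
binary search tree as `w`: `T(LRP(T(w))) = T(w)`. -/
theorem treeOf_lrp_treeOf (n : ℕ) (w : List (Fin n)) :
    BinTree.treeOf (BinTree.lrp (BinTree.treeOf w)) = BinTree.treeOf w :=
  (BinTree.isBST_treeOf w).treeOf_lrp
end

section
/- Every irreducible word of the sylvester rewriting system is the left-to-right postfix reading of some binary search tree. Concretely: if w over {1,...,n} contains no factor of the form c a v b with a ≤ b < c (v an arbitrary word), then w = LRP(T(w)). -/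
/-!
The last letter `b` of `w` is inserted first, so it is the root of `T(w)`. In an irreducible
word `u b`, no letter `c > b` of `u` is directly followed by a letter `a ≤ b` (that would be a
factor `c a v b`), so `u = u₁ u₂` with `u₁ ≤ b < u₂`. Then `T(w)` has left subtree `T(u₁)` and
right subtree `T(u₂)`, and induction on the irreducible factors `u₁`, `u₂` gives
`w = LRP(T(u₁)) LRP(T(u₂)) b = LRP(T(w))`.
-/

namespace BinTree

variable {α : Type*} [LinearOrder α]

theorem foldr_insert_node_of_forall_le {u : List α} {b : α} (h : ∀ x ∈ u, x ≤ b)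
    (l r : BinTree α) : u.foldr insert (node l b r) = node (u.foldr insert l) b r := by
  induction u with
  | nil => rfl
  | cons x u ih =>
    rw [List.forall_mem_cons] at h
    simp [ih h.2, insert, h.1]

theorem foldr_insert_node_of_forall_gt {u : List α} {b : α} (h : ∀ x ∈ u, b < x)
    (l r : BinTree α) : u.foldr insert (node l b r) = node l b (u.foldr insert r) := by
  induction u with
  | nil => rfl
  | cons x u ih =>
    rw [List.forall_mem_cons] at h
    simp [ih h.2, insert, not_le.mpr h.1]

theorem treeOf_append_append_singleton {u₁ u₂ : List α} {b : α} (h₁ : ∀ x ∈ u₁, x ≤ b)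
    (h₂ : ∀ x ∈ u₂, b < x) :
    treeOf (u₁ ++ u₂ ++ [b]) = node (treeOf u₁) b (treeOf u₂) := by
  simp only [treeOf, List.foldr_append, List.foldr_cons, List.foldr_nil, insert,
    foldr_insert_node_of_forall_gt h₂, foldr_insert_node_of_forall_le h₁]

end BinTree

section

variable {α : Type*} [LinearOrder α]

theorem HasSylvFactor.of_infix {x y : List α} (hxy : x <:+: y) (h : HasSylvFactor x) :
    HasSylvFactor y := by
  obtain ⟨p, s, rfl⟩ := hxy
  obtain ⟨p₀, v, s₀, a, b, c, hab, hbc, rfl⟩ := h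
  exact ⟨p ++ p₀, v, s₀ ++ s, a, b, c, hab, hbc, by simp⟩

theorem exists_split_of_not_hasSylvFactor_append_singleton {u : List α} {b : α}
    (h : ¬ HasSylvFactor (u ++ [b])) :
    ∃ u₁ u₂ : List α, u = u₁ ++ u₂ ∧ (∀ x ∈ u₁, x ≤ b) ∧ ∀ x ∈ u₂, b < x := by
  induction u with
  | nil => exact ⟨[], [], rfl, by simp, by simp⟩
  | cons x t ih =>
    have ht : ¬ HasSylvFactor (t ++ [b]) :=
      mt (HasSylvFactor.of_infix (List.suffix_cons x _).isInfix) h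
    obtain ⟨u₁, u₂, rfl, h₁, h₂⟩ := ih ht
    rcases le_or_gt x b with hxb | hbx
    · exact ⟨x :: u₁, u₂, rfl, List.forall_mem_cons.mpr ⟨hxb, h₁⟩, h₂⟩
    · rcases u₁ with _ | ⟨a, v⟩
      · exact ⟨[], x :: u₂, rfl, by simp, List.forall_mem_cons.mpr ⟨hbx, h₂⟩⟩
      · exact absurd ⟨[], v ++ u₂, [], a, b, x, h₁ a List.mem_cons_self, hbx, by simp⟩ h

theorem eq_lrp_treeOf_of_not_hasSylvFactor (w : List α) (h : ¬ HasSylvFactor w) :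
    w = BinTree.lrp (BinTree.treeOf w) := by
  rcases List.eq_nil_or_concat' w with rfl | ⟨u, b, rfl⟩
  · rfl
  obtain ⟨u₁, u₂, rfl, h₁, h₂⟩ := exists_split_of_not_hasSylvFactor_append_singleton h
  have hu₁ : ¬ HasSylvFactor u₁ :=
    mt (HasSylvFactor.of_infix (List.prefix_append u₁ (u₂ ++ [b])).isInfix) (by simpa using h)
  have hu₂ : ¬ HasSylvFactor u₂ := mt (HasSylvFactor.of_infix (List.infix_append u₁ u₂ [b])) h
  rw [BinTree.treeOf_append_append_singleton h₁ h₂, BinTree.lrp,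
    ← eq_lrp_treeOf_of_not_hasSylvFactor u₁ hu₁, ← eq_lrp_treeOf_of_not_hasSylvFactor u₂ hu₂]
termination_by w.length

end

/-- Every sylvester-irreducible word is the left-to-right postfix reading of its
binary search tree: if `w` contains no factor `c a v b` with `a ≤ b < c`, then
`w = LRP(T(w))`. -/
theorem irreducible_eq_lrp_treeOf (n : ℕ) (w : List (Fin n))
    (h : ¬ HasSylvFactor w) :
    w = BinTree.lrp (BinTree.treeOf w) :=
  eq_lrp_treeOf_of_not_hasSylvFactor w h
end

section
/- Every word of the form LRP(T) for a binary search tree T is irreducible for the sylvester rewriting system: LRP(T) contains no factor of the form c a v b with a ≤ b < c. -/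
/-!
By induction on the tree: `LRP(node L x R) = LRP(L) LRP(R) x` with `LRP(L) ≤ x < LRP(R)`.
A factor `c a … b` (`a ≤ b < c`) of this word lies inside `LRP(L)` or `LRP(R)`, or it
crosses a boundary. Across `LRP(L) | LRP(R) x` it would need `b < c` with `c ≤ x ≤ b`;
across `LRP(R) | x` it would need `b = x` and `a ≤ x` with `a` in `LRP(R)`.
-/

variable {α : Type*} [LinearOrder α]

theorem not_hasSylvFactor_singleton (x : α) : ¬HasSylvFactor [x] := by
  rintro ⟨p, v, s, a, b, c, -, -, h⟩
  have := congrArg List.length h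
  simp only [List.length_cons, List.length_nil, List.length_append] at this
  omega

theorem hasSylvFactor_append {u w : List α} (h : HasSylvFactor (u ++ w)) :
    HasSylvFactor u ∨ HasSylvFactor w ∨
      (∃ p q c a, u = p ++ c :: a :: q ∧ ∃ b ∈ w, a ≤ b ∧ b < c) ∨
      (∃ p w' c a, u = p ++ [c] ∧ w = a :: w' ∧ ∃ b ∈ w', a ≤ b ∧ b < c) := by
  obtain ⟨p, m, s, a, b, c, hab, hbc, h⟩ := h
  rcases List.append_eq_append_iff.mp h with ⟨p', -, rfl⟩ | ⟨u', rfl, h₁⟩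
  · exact Or.inr <| Or.inl ⟨p', m, s, a, b, c, hab, hbc, rfl⟩
  rcases List.cons_eq_append_iff.mp h₁ with ⟨rfl, rfl⟩ | ⟨u', rfl, h₂⟩
  · exact Or.inr <| Or.inl ⟨[], m, s, a, b, c, hab, hbc, rfl⟩
  rcases List.cons_eq_append_iff.mp h₂ with ⟨rfl, rfl⟩ | ⟨q, rfl, h₃⟩
  · exact Or.inr <| Or.inr <| Or.inr ⟨p, _, c, a, rfl, rfl, b, by simp, hab, hbc⟩
  rcases List.append_eq_append_iff.mp h₃ with ⟨q', rfl, h₄⟩ | ⟨m', rfl, rfl⟩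
  · rcases List.cons_eq_append_iff.mp h₄ with ⟨rfl, rfl⟩ | ⟨s', rfl, -⟩
    · exact Or.inr <| Or.inr <| Or.inl ⟨p, m, c, a, by simp, b, by simp, hab, hbc⟩
    · exact Or.inl ⟨p, m, s', a, b, c, hab, hbc, by simp⟩
  · exact Or.inr <| Or.inr <| Or.inl ⟨p, q, c, a, rfl, b, by simp, hab, hbc⟩

theorem not_hasSylvFactor_append_append_singleton {u v : List α} {x : α}
    (hux : ∀ y ∈ u, y ≤ x) (hxv : ∀ y ∈ v, x < y)
    (hu : ¬HasSylvFactor u) (hv : ¬HasSylvFactor v) : ¬HasSylvFactor (u ++ v ++ [x]) := by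
  have x_le : ∀ b ∈ v ++ [x], x ≤ b := by
    simp only [List.mem_append, List.mem_singleton]
    rintro b (hb | rfl)
    exacts [(hxv b hb).le, le_rfl]
  intro h
  rw [List.append_assoc] at h
  rcases hasSylvFactor_append h with h | h | ⟨p, q, c, a, rfl, b, hb, -, hbc⟩ |
      ⟨p, w', c, a, rfl, hw, b, hb, -, hbc⟩
  · exact hu h
  · rcases hasSylvFactor_append h with h | h | ⟨p, q, c, a, rfl, b, hb, hab, -⟩ |
        ⟨p, w', c, a, -, hw, b, hb, -, -⟩
    · exact hv h
    · exact not_hasSylvFactor_singleton x h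
    · rw [List.mem_singleton] at hb
      exact (hxv a (by simp)).not_ge (hb ▸ hab)
    · obtain ⟨-, rfl⟩ := List.cons_eq_cons.mp hw
      exact List.not_mem_nil hb
  · exact (hux c (by simp)).not_gt ((x_le b hb).trans_lt hbc)
  · exact (hux c (by simp)).not_gt ((x_le b (by simp [hw, hb])).trans_lt hbc)

theorem BinTree.IsBST.not_hasSylvFactor_lrp {T : BinTree α} (hT : T.IsBST) :
    ¬HasSylvFactor T.lrp := by
  induction T with
  | leaf => rintro ⟨p, v, s, a, b, c, -, -, h⟩; simp [BinTree.lrp] at h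
  | node l x r ihl ihr =>
    obtain ⟨hl, hr, hTl, hTr⟩ := hT
    exact not_hasSylvFactor_append_append_singleton hl hr (ihl hTl) (ihr hTr)

/-- The left-to-right postfix reading of any binary search tree is irreducible for the
sylvester rewriting system: it contains no factor `c a v b` with `a ≤ b < c`. -/
theorem lrp_bst_irreducible (n : ℕ) (T : BinTree (Fin n)) (hT : BinTree.IsBST T) :
    ¬ HasSylvFactor (BinTree.lrp T) :=
  hT.not_hasSylvFactor_lrp
end

section
/- Let w be an irreducible word for the sylvester rewriting system and let w = α^(1)···α^(k) be its decomposition into maximal strictly decreasing factors (columns). If α^(i) = α^(i+h) for some h ≥ 1, then this column has length 1. -/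
/-!
A strictly decreasing column of length at least 2 starts with a descent `x y`, `y < x`. If it
occurs again later in the word, the word contains the factor `x y v y`, where `v` runs up to
the second occurrence of `x`: a sylvester left-hand side `c a v b` with `c = x` and `a = b = y`.
-/

theorem List.eq_take_append_getElem_cons_drop {α : Type*} (l : List α) {k : ℕ}
    (hk : k < l.length) : l = l.take k ++ l[k] :: l.drop (k + 1) := by
  rw [← List.drop_eq_getElem_cons hk, List.take_append_drop]

theorem List.exists_eq_append_getElem_cons_append_getElem_cons {α : Type*} (l : List α)
    {i j : ℕ} (hij : i < j) (hj : j < l.length) :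
    ∃ p m s, l = p ++ l[i] :: m ++ l[j] :: s := by
  have hi : i < (l.take j).length := by simp only [List.length_take]; omega
  refine ⟨l.take i, (l.take j).drop (i + 1), l.drop (j + 1), ?_⟩
  conv_lhs =>
    rw [l.eq_take_append_getElem_cons_drop hj, (l.take j).eq_take_append_getElem_cons_drop hi]
  simp [List.take_take, Nat.min_eq_left hij.le]

theorem hasSylvFactor_flatten_of_repeated_descent {α : Type*} [LinearOrder α]
    {cols : List (List α)} {i j : ℕ} (hij : i < j) (hj : j < cols.length)
    (heq : cols[i] = cols[j]) {x y : α} {t : List α} (hcol : cols[i] = x :: y :: t)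
    (hyx : y < x) : HasSylvFactor cols.flatten := by
  obtain ⟨p, m, s, hcols⟩ := cols.exists_eq_append_getElem_cons_append_getElem_cons hij hj
  rw [hcols, ← heq, hcol]
  exact ⟨p.flatten, t ++ m.flatten ++ [x], t ++ s.flatten, y, y, x, le_rfl, hyx, by simp⟩

theorem sylvester_no_repeated_columns_general (n : ℕ) (w : List (Fin n))
    (hirr : ¬ HasSylvFactor w) (cols : List (List (Fin n)))
    (hjoin : w = cols.flatten)
    (hne : ∀ c ∈ cols, c ≠ [])
    (hdec : ∀ c ∈ cols, List.Chain' (· > ·) c)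
    (i j : Fin cols.length) (hij : i < j) (heq : cols.get i = cols.get j) :
    (cols.get i).length = 1 := by
  obtain ⟨i, hi⟩ := i
  obtain ⟨j, hj⟩ := j
  simp only [List.get_eq_getElem] at heq ⊢
  have hmem : cols[i] ∈ cols := List.getElem_mem hi
  match hcol : cols[i], hne _ hmem, hdec _ hmem with
  | [_], _, _ => rfl
  | x :: y :: t, _, hchain =>
    have hyx : y < x := (List.isChain_cons_cons.mp hchain).1
    exact absurd (hjoin ▸ hasSylvFactor_flatten_of_repeated_descent hij hj heq hcol hyx) hirr

/-- In the maximal-column decomposition of a sylvester-irreducible word, a repeated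
column must have length 1. Here `cols` is the decomposition of `w` into maximal
columns: each column is nonempty and strictly decreasing, and maximality means that
the last letter of each column is `≤` the first letter of the next. -/
theorem sylvester_no_repeated_columns (n : ℕ) (w : List (Fin n))
    (hirr : ¬ HasSylvFactor w) (cols : List (List (Fin n)))
    (hjoin : w = cols.flatten)
    (hne : ∀ c ∈ cols, c ≠ [])
    (hdec : ∀ c ∈ cols, List.Chain' (· > ·) c)
    (hmax : List.Chain' (fun c d => ∀ x ∈ c.getLast?, ∀ y ∈ d.head?, x ≤ y) cols)
    (i j : Fin cols.length) (hij : i < j) (heq : cols.get i = cols.get j) :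
    (cols.get i).length = 1 :=
  sylvester_no_repeated_columns_general n w hirr cols hjoin hne hdec i j hij heq
end

section
/- Let w be an irreducible word for the sylvester rewriting system, with letters w = α_1···α_m. Let I be the set of positions i such that α_i forms by itself a maximal column (i.e., is not part of a maximal strictly decreasing factor of length ≥ 2). Then for all i, i+h ∈ I with h ≥ 1, α_i ≤ α_{i+h}. -/
/-! Irreducibility forbids `c a v b` with `a ≤ b < c`, so if a letter `b` is smaller than
some earlier letter, it stays smaller than each letter between the two (move right one step at
a time), in particular than its immediate predecessor. A singleton column is at least its
predecessor, hence at least every earlier letter. -/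

theorem hasSylvFactor_of_mem {α : Type*} [LinearOrder α] {p l : List α} {a b c : α}
    (hab : a ≤ b) (hbc : b < c) (hb : b ∈ l) : HasSylvFactor (p ++ c :: a :: l) := by
  obtain ⟨v, s, rfl⟩ := List.mem_iff_append.mp hb
  exact ⟨p, v, s, a, b, c, hab, hbc, rfl⟩

theorem hasSylvFactor_of_getElem {α : Type*} [LinearOrder α] {w : List α} {k q : ℕ}
    (hkq : k + 2 ≤ q) (hq : q < w.length)
    (hab : w[k + 1] ≤ w[q]) (hbc : w[q] < w[k]) : HasSylvFactor w := by
  have hw : w = w.take k ++ w[k] :: w[k + 1] :: w.drop (k + 2) := by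
    rw [← List.drop_eq_getElem_cons, ← List.drop_eq_getElem_cons, List.take_append_drop]
  have hmem : w[q] ∈ w.drop (k + 2) :=
    List.mem_drop_iff_getElem.mpr ⟨q - (k + 2), by omega, by congr 1; omega⟩
  rw [hw]
  exact hasSylvFactor_of_mem hab hbc hmem

theorem getElem_lt_of_not_hasSylvFactor {α : Type*} [LinearOrder α] {w : List α}
    (hirr : ¬ HasSylvFactor w) {k m q : ℕ} (hkm : k ≤ m) (hmq : m < q) (hq : q < w.length)
    (hlt : w[q] < w[k]) : w[q] < w[m] := by
  induction m, hkm using Nat.le_induction with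
  | base => exact hlt
  | succ m hkm ih =>
    by_contra hle
    exact hirr (hasSylvFactor_of_getElem (by omega) hq (not_lt.mp hle) (ih (by omega) hlt))

/-- Let `w` be sylvester-irreducible, and let `I` be the set of positions whose letter
forms a maximal column by itself (its letter is `≥` the preceding letter and `≤` the
following letter, whenever these exist). Then the letters at positions of `I` are
non-decreasing. -/
theorem sylvester_singleton_columns_monotone (n : ℕ) (w : List (Fin n))
    (hirr : ¬ HasSylvFactor w)
    (I : Set ℕ)
    (hI : ∀ i, I i ↔ ∃ h : i < w.length,
      (∀ h' : 1 ≤ i, w.get ⟨i - 1, by omega⟩ ≤ w.get ⟨i, h⟩) ∧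
      (∀ h' : i + 1 < w.length, w.get ⟨i, h⟩ ≤ w.get ⟨i + 1, h'⟩))
    (i j : ℕ) (hj : I j) (hij : i < j) :
    ∀ (h₁ : i < w.length) (h₂ : j < w.length), w.get ⟨i, h₁⟩ ≤ w.get ⟨j, h₂⟩ := by
  intro h₁ h₂
  obtain ⟨_, hjL, -⟩ := (hI j).mp hj
  by_contra hlt
  have hprev : w[j] < w[j - 1] :=
    getElem_lt_of_not_hasSylvFactor hirr (by omega) (by omega) h₂ (not_le.mp hlt)
  exact hprev.not_ge (hjL (by omega))
end

section
/- Let w be an irreducible word for the sylvester rewriting system, γ ∈ A, and let x be the word obtained by concatenating, in order: all letters of w that are ≤ γ (in their original order), then all letters of w that are > γ (in their original order), then γ. Then wγ rewrites to x using only rules cavb → acvb with b = γ, and x is irreducible. -/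
/-- One step of sylvester rewriting in which the letter playing the role of `b`
is the distinguished final letter `γ`. -/
def SylvStepAt {α : Type*} [LinearOrder α] (γ : α) (u v : List α) : Prop :=
  ∃ (p m s : List α) (a c : α), a ≤ γ ∧ γ < c ∧
    u = p ++ c :: a :: (m ++ γ :: s) ∧ v = p ++ a :: c :: (m ++ γ :: s)

/-!
The rewriting moves each letter `c > γ` of `w` to the right past the letters `≤ γ` that follow
it; each move is the rule `c a v γ → a c v γ`.

For irreducibility, a word contains a left-hand side `c a v b` iff it contains a subsequence
`c a b` with `a ≤ b < c`: between a letter `c > b` and a later letter `a ≤ b` there is an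
adjacent pair making the same descent across `b`. In `x`, such a subsequence cannot straddle
the block of letters `≤ γ` and the block of letters `> γ`, nor end at the final `γ`, so it is a
subsequence of one block, hence of `w`.
-/

namespace List

variable {α : Type*}

theorem sublist_append_singleton_iff {u l : List α} {b z : α} :
    u ++ [b] <+ l ++ [z] ↔ u ++ [b] <+ l ∨ b = z ∧ u <+ l := by
  rw [← reverse_sublist]
  simp [sublist_cons_iff, sublist_reverse_iff]

theorem sublist_or_sublist_of_sublist_append [LinearOrder α] {L R v : List α} {b c : α}
    (hbc : b < c) (hLR : ∀ y ∈ L, ∀ z ∈ R, y ≤ z) (h : c :: v ++ [b] <+ L ++ R) :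
    c :: v ++ [b] <+ L ∨ c :: v ++ [b] <+ R := by
  obtain ⟨l₁, l₂, hsplit, h₁, h₂⟩ := sublist_append_iff.1 h
  rcases l₁ with _ | ⟨x, l₁⟩
  · exact Or.inr (by simpa [hsplit] using h₂)
  rcases l₂.eq_nil_or_concat with rfl | ⟨l₂, y, rfl⟩
  · exact Or.inl (by simpa [hsplit] using h₁)
  simp only [cons_append, cons.injEq, concat_eq_append, ← append_assoc] at hsplit
  obtain ⟨rfl, hsplit⟩ := hsplit
  obtain ⟨-, ⟨⟩⟩ := append_inj' hsplit rfl
  exact absurd (hLR c (h₁.subset (by simp)) b (h₂.subset (by simp))) (not_le.2 hbc)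

end List

section Irreducibility

open List

variable {α : Type*} [LinearOrder α]

theorem HasSylvFactor.append_left {w : List α} (q : List α) (h : HasSylvFactor w) :
    HasSylvFactor (q ++ w) := by
  obtain ⟨p, v, s, a, b, c, hab, hbc, rfl⟩ := h
  exact ⟨q ++ p, v, s, a, b, c, hab, hbc, by simp⟩

theorem hasSylvFactor_cons_append {u s : List α} {a b c : α} (hab : a ≤ b) (hbc : b < c)
    (ha : a ∈ u) (hb : b ∈ s) : HasSylvFactor (c :: (u ++ s)) := by
  induction u generalizing c with
  | nil => simp at ha
  | cons y u ih =>
    by_cases hy : y ≤ b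
    · obtain ⟨s₁, s₂, rfl⟩ := append_of_mem hb
      exact ⟨[], u ++ s₁, s₂, y, b, c, hy, hbc, by simp⟩
    · have ha' : a ∈ u := (mem_cons.1 ha).resolve_left fun hay => hy (hay ▸ hab)
      exact (ih (not_le.1 hy) ha').append_left [c]

theorem hasSylvFactor_iff_sublist {w : List α} :
    HasSylvFactor w ↔ ∃ a b c, a ≤ b ∧ b < c ∧ [c, a, b] <+ w := by
  constructor
  · rintro ⟨p, v, s, a, b, c, hab, hbc, rfl⟩
    exact ⟨a, b, c, hab, hbc, Sublist.trans (by simp) (sublist_append_right p _)⟩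
  · rintro ⟨a, b, c, hab, hbc, h⟩
    obtain ⟨r₁, r₂, rfl, hc, h⟩ := cons_sublist_iff.1 h
    obtain ⟨t₁, t₂, rfl, ha, hb⟩ := cons_sublist_iff.1 h
    obtain ⟨p, q, rfl⟩ := append_of_mem hc
    simpa using (hasSylvFactor_cons_append (u := q ++ t₁) hab hbc (by simp [ha])
      (singleton_sublist.1 hb)).append_left p

theorem not_hasSylvFactor_filter_append {w : List α} (γ : α) (hw : ¬ HasSylvFactor w) :
    ¬ HasSylvFactor (w.filter (· ≤ γ) ++ w.filter (fun a => γ < a) ++ [γ]) := by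
  simp only [hasSylvFactor_iff_sublist, not_exists, not_and] at hw ⊢
  intro a b c hab hbc h
  have hLG : ∀ y ∈ w.filter (· ≤ γ), ∀ z ∈ w.filter (fun a => γ < a), y ≤ z := by
    simp only [mem_filter, decide_eq_true_eq]
    exact fun y hy z hz => hy.2.trans hz.2.le
  rcases sublist_append_singleton_iff (u := [c, a]).1 h with h | ⟨rfl, h⟩
  · rcases sublist_or_sublist_of_sublist_append hbc hLG h with h | h <;>
      exact hw a b c hab hbc (h.trans filter_sublist)
  · rcases sublist_or_sublist_of_sublist_append (v := []) (hab.trans_lt hbc) hLG h with h | h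
    · have hc : c ∈ w.filter (· ≤ b) := h.subset (by simp)
      exact absurd hbc (not_lt.2 (of_decide_eq_true (mem_filter.1 hc).2))
    · have ha : a ∈ w.filter (fun a => b < a) := h.subset (by simp)
      exact absurd hab (not_le.2 (of_decide_eq_true (mem_filter.1 ha).2))

end Irreducibility

section Rewriting

open List

variable {α : Type*} [LinearOrder α] {γ : α}

theorem SylvStepAt.append_left {u v : List α} (q : List α) (h : SylvStepAt γ u v) :
    SylvStepAt γ (q ++ u) (q ++ v) := by
  obtain ⟨p, m, s, a, c, ha, hc, rfl, rfl⟩ := h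
  exact ⟨q ++ p, m, s, a, c, ha, hc, by simp, by simp⟩

theorem reflTransGen_sylvStepAt_append_left {u v : List α} (q : List α)
    (h : Relation.ReflTransGen (SylvStepAt γ) u v) :
    Relation.ReflTransGen (SylvStepAt γ) (q ++ u) (q ++ v) :=
  h.lift (q ++ ·) fun _ _ => SylvStepAt.append_left q

theorem reflTransGen_sylvStepAt_cons_append {c : α} (hc : γ < c) {l : List α}
    (hl : ∀ x ∈ l, x ≤ γ) (m s : List α) :
    Relation.ReflTransGen (SylvStepAt γ) (c :: (l ++ m ++ γ :: s)) (l ++ c :: (m ++ γ :: s)) := by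
  induction l with
  | nil => exact .refl
  | cons x l ih =>
    have hstep : SylvStepAt γ (c :: (x :: l ++ m ++ γ :: s)) (x :: c :: (l ++ m ++ γ :: s)) :=
      ⟨[], l ++ m, s, x, c, hl x (by simp), hc, by simp, by simp⟩
    exact .head hstep <| reflTransGen_sylvStepAt_append_left [x] <|
      ih fun y hy => hl y (by simp [hy])

theorem reflTransGen_sylvStepAt_filter (w : List α) :
    Relation.ReflTransGen (SylvStepAt γ) (w ++ [γ])
      (w.filter (· ≤ γ) ++ w.filter (fun a => γ < a) ++ [γ]) := by
  induction w with
  | nil => exact .refl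
  | cons x w ih =>
    have ih' := reflTransGen_sylvStepAt_append_left [x] ih
    by_cases hx : x ≤ γ
    · simpa [filter_cons, hx, not_lt.2 hx] using ih'
    · have hbubble := reflTransGen_sylvStepAt_cons_append (not_le.1 hx)
        (l := w.filter (· ≤ γ)) (by simp) (w.filter (fun a => γ < a)) []
      simpa [filter_cons, hx, not_le.1 hx] using ih'.trans hbubble

end Rewriting

/-- If `w` is sylvester-irreducible and `γ` a letter, then `wγ` rewrites, using only
rules `c a v b → a c v b` with `b = γ`, to the irreducible word `x` obtained by
concatenating the letters of `w` that are `≤ γ`, then those `> γ`, then `γ`. -/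
theorem sylvester_right_multiplication (n : ℕ) (w : List (Fin n)) (γ : Fin n)
    (hirr : ¬ HasSylvFactor w) :
    Relation.ReflTransGen (SylvStepAt γ) (w ++ [γ])
        (w.filter (· ≤ γ) ++ w.filter (fun a => γ < a) ++ [γ]) ∧
      ¬ HasSylvFactor (w.filter (· ≤ γ) ++ w.filter (fun a => γ < a) ++ [γ]) :=
  ⟨reflTransGen_sylvStepAt_filter w, not_hasSylvFactor_filter_append γ hirr⟩
end

section
/- In the hypoplactic rewriting system (A, T) with T = {w → Q(w) : |w| ≤ max(2n, 4), w ≠ Q(w)}, where Q(w) is the unique quasi-ribbon word equal to w in H_n, the irreducible words are exactly the quasi-ribbon words; consequently (A, T) is a finite complete rewriting system presenting H_n. -/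
/-- The defining relations of the hypoplactic monoid of rank `n`: the Knuth relations
`acb = cab` (`a ≤ b < c`), `bac = bca` (`a < b ≤ c`), together with `cadb = acbd` and
`bdac = dbca` (`a ≤ b < c ≤ d`). -/
def HypoRel (n : ℕ) (u v : List (Fin n)) : Prop :=
  ∃ a b c d : Fin n,
    (a ≤ b ∧ b < c ∧ u = [a, c, b] ∧ v = [c, a, b]) ∨
    (a < b ∧ b ≤ c ∧ u = [b, a, c] ∧ v = [b, c, a]) ∨
    (a ≤ b ∧ b < c ∧ c ≤ d ∧ u = [c, a, d, b] ∧ v = [a, c, b, d]) ∨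
    (a ≤ b ∧ b < c ∧ c ≤ d ∧ u = [b, d, a, c] ∧ v = [d, b, c, a])

/-- One application of a defining relation of the hypoplactic monoid inside a word.
The hypoplactic congruence is the equivalence relation generated by this relation. -/
def HypoStep (n : ℕ) (u v : List (Fin n)) : Prop :=
  ∃ p s l r, HypoRel n l r ∧ u = p ++ l ++ s ∧ v = p ++ r ++ s

/-- A quasi-ribbon word: a word whose maximal-column decomposition
`α⁽¹⁾ ⋯ α⁽ᵏ⁾` (nonempty strictly decreasing factors) satisfies that the last
(smallest) letter of `α⁽ⁱ⁺¹⁾` is `≥` the first (greatest) letter of `α⁽ⁱ⁾`. -/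
def QuasiRibbon (n : ℕ) (w : List (Fin n)) : Prop :=
  ∃ cols : List (List (Fin n)), w = cols.flatten ∧ (∀ c ∈ cols, c ≠ []) ∧
    (∀ c ∈ cols, List.Chain' (· > ·) c) ∧
    List.Chain' (fun c d => ∀ x ∈ c.head?, ∀ y ∈ d.getLast?, x ≤ y) cols

/-- One step of rewriting with the system `T = {w → Q(w) : |w| ≤ max(2n,4), w ≠ Q(w)}`. -/
def HypoTStep (n : ℕ) (Q : List (Fin n) → List (Fin n)) (u v : List (Fin n)) : Prop :=
  ∃ p s m, m.length ≤ max (2 * n) 4 ∧ m ≠ Q m ∧ u = p ++ m ++ s ∧ v = p ++ Q m ++ s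

/-!
A word is quasi-ribbon exactly when every factor of it that begins with a letter greater than
the letter it ends with is a column: in a quasi-ribbon word every letter of a later column
is at least every letter of an earlier one, and conversely, if the first letter of a maximal
column exceeds the last letter of the next one, these two columns form a factor violating the
condition. Hence quasi-ribbon words are closed under taking factors, and a word that is not
quasi-ribbon has a non-quasi-ribbon factor of length at most `2n`, so the irreducible words
are the quasi-ribbon ones. Each rule `w → Q(w)` preserves `Q` and strictly decreases a word in
the length-lexicographic order, which is well founded; so the system terminates, every word
reduces to `Q(w)`, and confluence and the presentation of `H_n` follow since `Q` is
constant exactly on the hypoplactic classes.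
-/

open List Relation

theorem Relation.EqvGen.apply_eq {α β : Type*} {r : α → α → Prop} {f : α → β}
    (hf : ∀ a b, r a b → f a = f b) {a b : α} (h : EqvGen r a b) : f a = f b :=
  congrArg (Quot.lift f hf) (Quot.eqvGen_sound h)

namespace List

variable {α : Type*}

theorem Lex.append_of_length_eq {r : α → α → Prop} {l₁ l₂ : List α} (h : Lex r l₁ l₂)
    (hlen : l₁.length = l₂.length) (s t : List α) : Lex r (l₁ ++ s) (l₂ ++ t) := by
  induction h with
  | nil => simp at hlen
  | rel h => exact .rel h
  | cons _ ih => exact .cons (ih (by simpa using hlen))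

section Columns

variable [LinearOrder α] {l : List α} {x z : α}

theorem IsChain.le_of_mem_head? (hl : l.IsChain (· > ·)) (hx : x ∈ l.head?) (hz : z ∈ l) :
    z ≤ x := by
  obtain _ | ⟨a, t⟩ := l
  · simp at hx
  obtain rfl : a = x := by simpa using hx
  rcases mem_cons.1 hz with rfl | hz
  · exact le_rfl
  · exact (rel_of_pairwise_cons (isChain_iff_pairwise.1 hl) hz).le

theorem IsChain.getLast?_le (hl : l.IsChain (· > ·)) (hx : x ∈ l.getLast?) (hz : z ∈ l) :
    x ≤ z := by
  obtain rfl | ⟨t, a, rfl⟩ := eq_nil_or_concat' l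
  · simp at hx
  obtain rfl : a = x := by simpa using hx
  rcases mem_append.1 hz with hz | hz
  · exact ((pairwise_append.1 (isChain_iff_pairwise.1 hl)).2.2 z hz a (mem_singleton_self a)).le
  · rw [mem_singleton.1 hz]

theorem IsChain.length_le_card [Fintype α] (hl : l.IsChain (· > ·)) :
    l.length ≤ Fintype.card α :=
  Nodup.length_le_card ((isChain_iff_pairwise.1 hl).imp ne_of_gt)

theorem exists_eq_append_isChain_gt : ∀ {w : List α}, w ≠ [] →
    ∃ c r, w = c ++ r ∧ c ≠ [] ∧ c.IsChain (· > ·) ∧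
      ∀ x ∈ c.getLast?, ∀ y ∈ r.head?, x ≤ y
  | [], hw => absurd rfl hw
  | a :: w, _ => by
    by_cases hdesc : ∃ b ∈ w.head?, b < a
    · obtain ⟨b, hb, hba⟩ := hdesc
      obtain ⟨c, r, rfl, hc, hcc, hcr⟩ :=
        exists_eq_append_isChain_gt (w := w) (by rintro rfl; simp at hb)
      rw [head?_append_of_ne_nil _ hc] at hb
      refine ⟨a :: c, r, rfl, cons_ne_nil a c, isChain_cons.2 ⟨?_, hcc⟩, ?_⟩
      · intro y hy
        rwa [Option.mem_unique hy hb]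
      · rwa [getLast?_cons_of_ne_nil hc]
    · push Not at hdesc
      exact ⟨[a], w, rfl, cons_ne_nil a [], isChain_singleton a, by simpa using hdesc⟩

end Columns

end List

section QuasiRibbon

variable {n : ℕ}

theorem head_le_of_mem_flatten {c : List (Fin n)} {rest : List (List (Fin n))} {x z : Fin n}
    (hne : ∀ d ∈ rest, d ≠ []) (hdec : ∀ d ∈ rest, d.IsChain (· > ·))
    (hch : (c :: rest).IsChain (fun c d => ∀ x ∈ c.head?, ∀ y ∈ d.getLast?, x ≤ y))
    (hx : x ∈ c.head?) (hz : z ∈ rest.flatten) : x ≤ z := by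
  induction rest generalizing c x with
  | nil => simp at hz
  | cons d rest ih =>
    rw [isChain_cons_cons] at hch
    have hd : d ≠ [] := hne d mem_cons_self
    obtain ⟨y, hy⟩ : ∃ y, y ∈ d.getLast? := ⟨_, getLast?_eq_some_getLast hd⟩
    have hxy : x ≤ y := hch.1 x hx y hy
    rw [flatten_cons, mem_append] at hz
    rcases hz with hz | hz
    · exact hxy.trans ((hdec d mem_cons_self).getLast?_le hy hz)
    · obtain ⟨h, hh⟩ : ∃ h, h ∈ d.head? := ⟨_, head?_eq_some_head hd⟩
      have hyh : y ≤ h := (hdec d mem_cons_self).le_of_mem_head? hh (mem_of_mem_getLast? hy)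
      exact hxy.trans (hyh.trans (ih (fun e he => hne e (mem_cons_of_mem d he))
        (fun e he => hdec e (mem_cons_of_mem d he)) hch.2 hh hz))

theorem QuasiRibbon.isChain_of_infix {w v : List (Fin n)} {x y : Fin n} (hw : QuasiRibbon n w)
    (hv : v <:+: w) (hx : x ∈ v.head?) (hy : y ∈ v.getLast?) (hxy : y < x) :
    v.IsChain (· > ·) := by
  obtain ⟨cols, rfl, hne, hdec, hch⟩ := hw
  induction cols with
  | nil => simp [eq_nil_of_infix_nil hv] at hx
  | cons c rest ih =>
    rw [flatten_cons, infix_append_iff_ne_nil] at hv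
    rcases hv with hv | hv | ⟨l₁, l₂, h₁, h₂, rfl, hl₁, hl₂⟩
    · exact (hdec c mem_cons_self).infix hv
    · exact ih hv (fun d hd => hne d (mem_cons_of_mem c hd))
        (fun d hd => hdec d (mem_cons_of_mem c hd)) hch.tail
    · exfalso
      rw [head?_append_of_ne_nil _ h₁] at hx
      rw [getLast?_append_of_ne_nil _ h₂] at hy
      obtain ⟨h, hh⟩ : ∃ h, h ∈ c.head? := ⟨_, head?_eq_some_head (hne c mem_cons_self)⟩
      have hxh : x ≤ h :=
        (hdec c mem_cons_self).le_of_mem_head? hh (hl₁.subset (mem_of_mem_head? hx))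
      have hhy : h ≤ y := head_le_of_mem_flatten (fun d hd => hne d (mem_cons_of_mem c hd))
        (fun d hd => hdec d (mem_cons_of_mem c hd)) hch hh (hl₂.subset (mem_of_mem_getLast? hy))
      exact (hxh.trans hhy).not_gt hxy

/-- The witness `v` is a pair of consecutive maximal columns, hence has length at most `2 * n`. -/
theorem quasiRibbon_or_exists_infix (w : List (Fin n)) :
    QuasiRibbon n w ∨ ∃ v, v <:+: w ∧ v.length ≤ 2 * n ∧
      (∃ x ∈ v.head?, ∃ y ∈ v.getLast?, y < x) ∧ ¬ v.IsChain (· > ·) := by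
  rcases eq_or_ne w [] with rfl | hw
  · exact .inl ⟨[], rfl, by simp, by simp, isChain_nil⟩
  obtain ⟨c, r, rfl, hc, hcc, hcr⟩ := exists_eq_append_isChain_gt hw
  have hlen : r.length < (c ++ r).length := by simpa using length_pos_iff.2 hc
  rcases quasiRibbon_or_exists_infix r with
    ⟨_ | ⟨d, rest⟩, rfl, hne, hdec, hch⟩ | ⟨v, hv, hbad⟩
  · exact .inl ⟨[c], by simp, forall_mem_singleton.2 hc, forall_mem_singleton.2 hcc,
      isChain_singleton c⟩
  · have hd : d ≠ [] := hne d mem_cons_self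
    have hdd : d.IsChain (· > ·) := hdec d mem_cons_self
    by_cases hcd : ∀ x ∈ c.head?, ∀ y ∈ d.getLast?, x ≤ y
    · refine .inl ⟨c :: d :: rest, rfl, ?_, ?_, isChain_cons_cons.2 ⟨hcd, hch⟩⟩
      · exact forall_mem_cons.2 ⟨hc, hne⟩
      · exact forall_mem_cons.2 ⟨hcc, hdec⟩
    · push Not at hcd
      obtain ⟨x, hx, y, hy, hyx⟩ := hcd
      rw [flatten_cons, head?_append_of_ne_nil _ hd] at hcr
      refine .inr ⟨c ++ d, ⟨[], rest.flatten, by simp⟩, ?_, ⟨x, ?_, y, ?_, hyx⟩, ?_⟩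
      · have hcn := hcc.length_le_card
        have hdn := hdd.length_le_card
        rw [Fintype.card_fin] at hcn hdn
        rw [length_append]
        omega
      · rwa [head?_append_of_ne_nil _ hc]
      · rwa [getLast?_append_of_ne_nil _ hd]
      · rw [isChain_append]
        rintro ⟨-, -, hgt⟩
        have ha := getLast?_eq_some_getLast hc
        have hb := head?_eq_some_head hd
        exact (hcr _ ha _ hb).not_gt (hgt _ ha _ hb)
  · exact .inr ⟨v, hv.trans (infix_append_right), hbad⟩
termination_by w.length

theorem QuasiRibbon.of_infix {w v : List (Fin n)} (hw : QuasiRibbon n w) (hv : v <:+: w) :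
    QuasiRibbon n v :=
  (quasiRibbon_or_exists_infix v).resolve_right fun ⟨_, hu, _, ⟨_, hx, _, hy, hyx⟩, hu'⟩ =>
    hu' (hw.isChain_of_infix (hu.trans hv) hx hy hyx)

theorem exists_infix_not_quasiRibbon {w : List (Fin n)} (hw : ¬ QuasiRibbon n w) :
    ∃ v, v <:+: w ∧ v.length ≤ 2 * n ∧ ¬ QuasiRibbon n v := by
  obtain ⟨v, hv, hlen, ⟨_, hx, _, hy, hyx⟩, hv'⟩ :=
    (quasiRibbon_or_exists_infix w).resolve_left hw
  exact ⟨v, hv, hlen, fun h => hv' (h.isChain_of_infix (infix_refl v) hx hy hyx)⟩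

theorem HypoRel.length_eq {u v : List (Fin n)} (h : HypoRel n u v) : u.length = v.length := by
  obtain ⟨-, -, -, -, ⟨-, -, rfl, rfl⟩ | ⟨-, -, rfl, rfl⟩ |
    ⟨-, -, -, rfl, rfl⟩ | ⟨-, -, -, rfl, rfl⟩⟩ := h
  all_goals rfl

theorem HypoStep.length_eq {u v : List (Fin n)} (h : HypoStep n u v) : u.length = v.length := by
  obtain ⟨p, s, l, r, hlr, rfl, rfl⟩ := h
  simp [hlr.length_eq]

theorem HypoStep.append_append {u v : List (Fin n)} (h : HypoStep n u v) (p s : List (Fin n)) :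
    HypoStep n (p ++ u ++ s) (p ++ v ++ s) := by
  obtain ⟨p', s', l, r, hlr, rfl, rfl⟩ := h
  exact ⟨p ++ p', s' ++ s, l, r, hlr, by simp, by simp⟩

theorem eqvGen_hypoStep_append_append {u v : List (Fin n)} (h : EqvGen (HypoStep n) u v)
    (p s : List (Fin n)) : EqvGen (HypoStep n) (p ++ u ++ s) (p ++ v ++ s) := by
  induction h with
  | rel _ _ h => exact .rel _ _ (h.append_append p s)
  | refl => exact .refl _
  | symm _ _ _ ih => exact ih.symm
  | trans _ _ _ _ _ ih₁ ih₂ => exact ih₁.trans _ _ _ ih₂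

/-- The normal-form map of the cross-section of `H_n` formed by the quasi-ribbon words. -/
structure IsQuasiRibbonNormalForm (n : ℕ) (Q : List (Fin n) → List (Fin n)) : Prop where
  quasiRibbon : ∀ w, QuasiRibbon n (Q w)
  eqvGen : ∀ w, EqvGen (HypoStep n) w (Q w)
  eq_of_eqvGen : ∀ w v, QuasiRibbon n v → EqvGen (HypoStep n) w v → v = Q w

namespace IsQuasiRibbonNormalForm

variable {Q : List (Fin n) → List (Fin n)}

theorem eq_self_iff (hQ : IsQuasiRibbonNormalForm n Q) {w : List (Fin n)} :
    Q w = w ↔ QuasiRibbon n w :=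
  ⟨fun h => h ▸ hQ.quasiRibbon w, fun h => (hQ.eq_of_eqvGen w w h (.refl w)).symm⟩

theorem eqvGen_iff (hQ : IsQuasiRibbonNormalForm n Q) {u v : List (Fin n)} :
    EqvGen (HypoStep n) u v ↔ Q u = Q v :=
  ⟨fun h => (hQ.eq_of_eqvGen u (Q v) (hQ.quasiRibbon v) (h.trans _ _ _ (hQ.eqvGen v))).symm,
    fun h => (hQ.eqvGen u).trans _ _ _ (h ▸ (hQ.eqvGen v).symm)⟩

theorem length_eq (hQ : IsQuasiRibbonNormalForm n Q) (w : List (Fin n)) :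
    (Q w).length = w.length :=
  ((hQ.eqvGen w).apply_eq (f := length) fun _ _ => HypoStep.length_eq).symm

theorem apply_eq_of_hypoTStep (hQ : IsQuasiRibbonNormalForm n Q) {u v : List (Fin n)}
    (h : HypoTStep n Q u v) : Q u = Q v := by
  obtain ⟨p, s, m, -, -, rfl, rfl⟩ := h
  exact hQ.eqvGen_iff.1 (eqvGen_hypoStep_append_append (hQ.eqvGen m) p s)

theorem apply_eq_of_eqvGen_hypoTStep (hQ : IsQuasiRibbonNormalForm n Q) {u v : List (Fin n)}
    (h : EqvGen (HypoTStep n Q) u v) : Q u = Q v :=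
  h.apply_eq (f := Q) fun _ _ => hQ.apply_eq_of_hypoTStep

theorem not_exists_hypoTStep_iff (hQ : IsQuasiRibbonNormalForm n Q) {w : List (Fin n)} :
    (¬ ∃ v, HypoTStep n Q w v) ↔ QuasiRibbon n w := by
  refine ⟨fun hirr => by_contra fun hw => ?_, ?_⟩
  · obtain ⟨m, ⟨p, s, rfl⟩, hlen, hm⟩ := exists_infix_not_quasiRibbon hw
    exact hirr ⟨p ++ Q m ++ s, p, s, m, hlen.trans (le_max_left _ _),
      fun h => hm (hQ.eq_self_iff.1 h.symm), rfl, rfl⟩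
  · rintro hw ⟨v, p, s, m, -, hm, rfl, -⟩
    exact hm (hQ.eq_self_iff.2 (hw.of_infix (infix_append p m s))).symm

theorem shortlex_of_hypoTStep (hQ : IsQuasiRibbonNormalForm n Q)
    (hlex : ∀ w, Q w = w ∨ List.Lex (· < ·) (Q w) w) {u v : List (Fin n)}
    (h : HypoTStep n Q u v) : Shortlex (· < ·) v u := by
  obtain ⟨p, s, m, -, hm, rfl, rfl⟩ := h
  have hQm : List.Lex (· < ·) (Q m) m := (hlex m).resolve_left (Ne.symm hm)
  have := (Shortlex.of_lex (by simp [hQ.length_eq m])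
    (hQm.append_of_length_eq (hQ.length_eq m) s s)).append_left p
  simpa only [append_assoc] using this

theorem wellFounded_hypoTStep (hQ : IsQuasiRibbonNormalForm n Q)
    (hlex : ∀ w, Q w = w ∨ List.Lex (· < ·) (Q w) w) :
    WellFounded (flip (HypoTStep n Q)) :=
  Subrelation.wf (hQ.shortlex_of_hypoTStep hlex) (Shortlex.wf wellFounded_lt)

theorem reflTransGen_hypoTStep (hQ : IsQuasiRibbonNormalForm n Q)
    (hlex : ∀ w, Q w = w ∨ List.Lex (· < ·) (Q w) w) (w : List (Fin n)) :
    ReflTransGen (HypoTStep n Q) w (Q w) := by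
  induction w using (hQ.wellFounded_hypoTStep hlex).induction with
  | _ w ih =>
    by_cases hw : QuasiRibbon n w
    · rw [hQ.eq_self_iff.2 hw]
    obtain ⟨m, ⟨p, s, rfl⟩, hlen, hm⟩ := exists_infix_not_quasiRibbon hw
    have h : HypoTStep n Q (p ++ m ++ s) (p ++ Q m ++ s) :=
      ⟨p, s, m, hlen.trans (le_max_left _ _), fun h => hm (hQ.eq_self_iff.1 h.symm), rfl, rfl⟩
    exact .head h (hQ.apply_eq_of_hypoTStep h ▸ ih _ h)

theorem eqvGen_hypoTStep_iff (hQ : IsQuasiRibbonNormalForm n Q)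
    (hlex : ∀ w, Q w = w ∨ List.Lex (· < ·) (Q w) w) {u v : List (Fin n)} :
    EqvGen (HypoTStep n Q) u v ↔ EqvGen (HypoStep n) u v := by
  refine ⟨fun h => hQ.eqvGen_iff.2 (hQ.apply_eq_of_eqvGen_hypoTStep h), fun h => ?_⟩
  have hu := EqvGen.reflTransGen_le_eqvGen _ _ _ (hQ.reflTransGen_hypoTStep hlex u)
  have hv := EqvGen.reflTransGen_le_eqvGen _ _ _ (hQ.reflTransGen_hypoTStep hlex v)
  exact hu.trans _ _ _ (hQ.eqvGen_iff.1 h ▸ hv.symm)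

end IsQuasiRibbonNormalForm

end QuasiRibbon

/-- The hypoplactic rewriting system `(A, T)` with rules `w → Q(w)` for
`|w| ≤ max(2n, 4)` and `w ≠ Q(w)`, where `Q(w)` is the unique quasi-ribbon word equal
to `w` in `H_n`: the rule set is finite, the irreducible words are exactly the
quasi-ribbon words, the system is noetherian and confluent, and it presents `H_n`
(its Thue congruence coincides with the hypoplactic congruence). -/
theorem hypoplactic_fcrs (n : ℕ) (Q : List (Fin n) → List (Fin n))
    (hQrib : ∀ w, QuasiRibbon n (Q w))
    (hQcong : ∀ w, Relation.EqvGen (HypoStep n) w (Q w))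
    (hQcross : ∀ w v, QuasiRibbon n v → Relation.EqvGen (HypoStep n) w v → v = Q w)
    (hQlex : ∀ w, Q w = w ∨ List.Lex (· < ·) (Q w) w) :
    Set.Finite {p : List (Fin n) × List (Fin n) |
        p.1.length ≤ max (2 * n) 4 ∧ p.1 ≠ Q p.1 ∧ p.2 = Q p.1} ∧
    (∀ w, (¬ ∃ v, HypoTStep n Q w v) ↔ QuasiRibbon n w) ∧
    (¬ ∃ f : ℕ → List (Fin n), ∀ i, HypoTStep n Q (f i) (f (i + 1))) ∧
    (∀ u u' u'', Relation.ReflTransGen (HypoTStep n Q) u u' →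
      Relation.ReflTransGen (HypoTStep n Q) u u'' →
      ∃ v, Relation.ReflTransGen (HypoTStep n Q) u' v ∧
        Relation.ReflTransGen (HypoTStep n Q) u'' v) ∧
    (∀ u v, Relation.EqvGen (HypoTStep n Q) u v ↔ Relation.EqvGen (HypoStep n) u v) := by
  have hQ : IsQuasiRibbonNormalForm n Q := ⟨hQrib, hQcong, hQcross⟩
  have hQ_eq {u v} (h : ReflTransGen (HypoTStep n Q) u v) : Q v = Q u :=
    (hQ.apply_eq_of_eqvGen_hypoTStep (EqvGen.reflTransGen_le_eqvGen _ _ _ h)).symm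
  refine ⟨?_, fun w => hQ.not_exists_hypoTStep_iff, ?_, ?_,
    fun u v => hQ.eqvGen_hypoTStep_iff hQlex⟩
  · refine ((finite_length_le (Fin n) (max (2 * n) 4)).image fun m => (m, Q m)).subset ?_
    rintro ⟨m, r⟩ ⟨hm, -, hr : r = Q m⟩
    exact ⟨m, hm, by rw [hr]⟩
  · rintro ⟨f, hf⟩
    exact (wellFounded_iff_isEmpty_descending_chain.1 (hQ.wellFounded_hypoTStep hQlex)).false
      ⟨f, hf⟩
  · intro u u' u'' h' h''
    exact ⟨Q u, hQ_eq h' ▸ hQ.reflTransGen_hypoTStep hQlex u',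
      hQ_eq h'' ▸ hQ.reflTransGen_hypoTStep hQlex u''⟩
end
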